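/- arXiv:math/0303062 — 2 statements merged into one kernel-verified Lean document; each statement's English description precedes it below -/
import Mathlib

section
/- The category of groups does not satisfy the cube theorem. Concretely: the pushout in the category of groups of Z ← 1 → Z is the free group F on two generators a and b; pulling the pushout square (1 → Z, 1 → Z, with pushout F) back along the inclusion of the infinite cyclic subgroup ⟨ab⟩ ≤ F yields a square whose three initial vertices are trivial groups (since ⟨a⟩ ∩ ⟨ab⟩ = 1 and ⟨b⟩ ∩ ⟨ab⟩ = 1 in F) and whose fourth vertex is ⟨ab⟩ ≅ Z; this square is not a pushout square, because the pushout of 1 ← 1 → 1 is the trivial group while ⟨ab⟩ is infinite cyclic. -/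
/-!
The exponent sums in `a` and in `b` are homomorphisms `F → ℤ`, each killing one generator but
not `ab`; hence `⟨a⟩` and `⟨b⟩` meet `⟨ab⟩` trivially and `ab` has infinite order. On the other
hand the vertex of a pushout of `1 ← 1 → 1` is trivial: its identity and its trivial endomorphism
agree on both legs.
-/

open CategoryTheory Limits Subgroup Multiplicative

section TorsionFreeImage

variable {G H : Type*} [Group G] [Group H] [IsMulTorsionFree H] (φ : G →* H)

theorem Subgroup.zpowers_inf_zpowers_eq_bot_of_map {c g : G} (hc : φ c = 1) (hg : φ g ≠ 1) :
    zpowers c ⊓ zpowers g = ⊥ := by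
  rw [eq_bot_iff]
  rintro _ ⟨hc', n, rfl⟩
  have hn : φ g ^ n = 1 := by
    rw [← map_zpow]
    exact (zpowers_le (H := φ.ker) |>.2 hc) hc'
  simp [(IsMulTorsionFree.zpow_eq_one_iff_right hg).1 hn]

theorem not_isOfFinOrder_of_map_ne_one {g : G} (hg : φ g ≠ 1) : ¬IsOfFinOrder g :=
  fun h => hg ((isOfFinOrder_iff_eq_one _).1 (φ.isOfFinOrder h))

end TorsionFreeImage

theorem Subgroup.nonempty_zpowers_mulEquiv_int {G : Type*} [Group G] {g : G}
    (hg : ¬IsOfFinOrder g) : Nonempty (zpowers g ≃* Multiplicative ℤ) :=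
  have : Infinite (zpowers g) := (infinite_zpowers.2 hg).to_subtype
  ⟨intCyclicMulEquiv.symm⟩

namespace FreeGroup

variable {α : Type*} [DecidableEq α]

def expSum (i : α) : FreeGroup α →* Multiplicative ℤ :=
  lift (Pi.mulSingle i (ofAdd 1))

@[simp]
theorem expSum_of_self (i : α) : expSum i (of i) = ofAdd 1 := by
  simp [expSum]

@[simp]
theorem expSum_of_of_ne {i j : α} (h : j ≠ i) : expSum i (of j) = 1 := by
  simp [expSum, h]

end FreeGroup

namespace GrpCat

-- Each `rfl` identifies `Multiplicative ℤ` with the carrier of `GrpCat.of (Multiplicative ℤ)`.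
theorem isPushout_freeGroup_fin_two :
    IsPushout (ofHom (1 : PUnit →* Multiplicative ℤ)) (ofHom (1 : PUnit →* Multiplicative ℤ))
      (ofHom (zpowersHom (FreeGroup (Fin 2)) (.of 0)))
      (ofHom (zpowersHom (FreeGroup (Fin 2)) (.of 1))) := by
  refine .of_isColimit (PushoutCocone.IsColimit.mk (by ext; simp)
    (fun s => ofHom (FreeGroup.lift ![s.inl.hom (ofAdd (1 : ℤ)), s.inr.hom (ofAdd (1 : ℤ))]))
    (fun s => hom_ext (MonoidHom.ext_mint (by simp; rfl)))
    (fun s => hom_ext (MonoidHom.ext_mint (by simp; rfl)))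
    (fun s m h₀ h₁ => hom_ext (FreeGroup.ext_hom _ _ (Fin.forall_fin_two.2 ⟨?_, ?_⟩))))
  · simp [← h₀, Function.comp_def]; rfl
  · simp [← h₁, Function.comp_def]; rfl

theorem subsingleton_of_isPushout_punit {G : Type*} [Group G]
    (h : IsPushout (𝟙 (of PUnit)) (𝟙 (of PUnit)) (ofHom (1 : PUnit →* G))
      (ofHom (1 : PUnit →* G))) : Subsingleton G := by
  have hid : 𝟙 (of G) = ofHom 1 := h.hom_ext (by ext; simp) (by ext; simp)
  exact subsingleton_of_forall_eq 1 fun x => by simpa using ConcreteCategory.congr_hom hid x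

end GrpCat

/-- **Example 1.2.** The category of groups does not satisfy the cube theorem.
Concretely, let `F` be the free group on two generators `a` and `b`.  Then:
* the push-out in the category of groups of `ℤ ⟵ 1 ⟶ ℤ` is `F` (via `n ↦ aⁿ` and
  `n ↦ bⁿ`);
* pulling this push-out square back along the inclusion of the infinite cyclic
  subgroup `⟨ab⟩ ≤ F` yields a square whose three initial vertices are trivial
  (since `⟨a⟩ ⊓ ⟨ab⟩ = 1` and `⟨b⟩ ⊓ ⟨ab⟩ = 1` in `F`) and whose fourth vertex is
  `⟨ab⟩ ≅ ℤ`;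
* this square is not a push-out square, because the push-out of `1 ⟵ 1 ⟶ 1` is the
  trivial group while `⟨ab⟩` is infinite cyclic. -/
theorem category_of_groups_fails_cube_theorem :
    ∀ (F : Type) (_ : F = FreeGroup (Fin 2)),
    ∀ (a b : FreeGroup (Fin 2)), a = FreeGroup.of 0 → b = FreeGroup.of 1 →
      -- (1) `F = ℤ * ℤ` is the push-out of `ℤ ⟵ 1 ⟶ ℤ` in the category of groups
      (IsPushout
        (GrpCat.ofHom (1 : PUnit →* Multiplicative ℤ))
        (GrpCat.ofHom (1 : PUnit →* Multiplicative ℤ))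
        (GrpCat.ofHom ((zpowersHom (FreeGroup (Fin 2))) a))
        (GrpCat.ofHom ((zpowersHom (FreeGroup (Fin 2))) b))) ∧
      -- (2) the pull-backs of `⟨a⟩` and `⟨b⟩` along `⟨ab⟩ ≤ F` are trivial
      Subgroup.zpowers a ⊓ Subgroup.zpowers (a * b) = ⊥ ∧
      Subgroup.zpowers b ⊓ Subgroup.zpowers (a * b) = ⊥ ∧
      -- and the fourth vertex `⟨ab⟩` is infinite cyclic
      Nonempty (Subgroup.zpowers (a * b) ≃* Multiplicative ℤ) ∧
      -- (3) the pulled-back square, with three trivial vertices and fourth vertex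
      -- `⟨ab⟩`, is not a push-out square
      ¬ IsPushout (𝟙 (GrpCat.of PUnit)) (𝟙 (GrpCat.of PUnit))
          (GrpCat.ofHom (1 : PUnit →* Subgroup.zpowers (a * b)))
          (GrpCat.ofHom (1 : PUnit →* Subgroup.zpowers (a * b))) := by
  intro F _ a b ha hb
  have hab : FreeGroup.expSum 0 (a * b) ≠ 1 := by simp [ha, hb]
  have hab_inf : ¬IsOfFinOrder (a * b) := not_isOfFinOrder_of_map_ne_one _ hab
  refine ⟨ha ▸ hb ▸ GrpCat.isPushout_freeGroup_fin_two,
    zpowers_inf_zpowers_eq_bot_of_map (FreeGroup.expSum 1) (by simp [ha]) (by simp [ha, hb]),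
    zpowers_inf_zpowers_eq_bot_of_map (FreeGroup.expSum 0) (by simp [hb]) hab,
    nonempty_zpowers_mulEquiv_int hab_inf, fun h => ?_⟩
  have := GrpCat.subsingleton_of_isPushout_punit h
  exact infinite_zpowers.2 hab_inf (Set.toFinite _)
end

section
/- For any groups A and B, the pushout in the category of groups of the two product projections p₁ : A × B → A and p₂ : A × B → B is the trivial group. Hence the join of any two groups, computed as this pushout, is trivial, and the category of groups satisfies the join axiom. -/
/-!
A cocone `(f, g)` under `A ⟵ A × B ⟶ B` satisfies `f a = g 1 = 1` (evaluate the cocone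
condition at `(a, 1)`) and likewise `g b = f 1 = 1`, so both legs are trivial and the
cocone factors uniquely through the trivial group, which is a zero object of `GrpCat`.
-/

open CategoryTheory

namespace MonoidHom

variable {M N P : Type*} [MulOneClass M] [MulOneClass N] [MulOneClass P]
  {f : M →* P} {g : N →* P}

theorem eq_one_left_of_comp_fst_eq_comp_snd
    (h : f.comp (fst M N) = g.comp (snd M N)) : f = 1 := by
  ext a
  simpa using DFunLike.congr_fun h (a, 1)

theorem eq_one_right_of_comp_fst_eq_comp_snd
    (h : f.comp (fst M N) = g.comp (snd M N)) : g = 1 := by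
  ext b
  simpa using (DFunLike.congr_fun h (1, b)).symm

end MonoidHom

/-- **Example 2.5.** For any groups `A` and `B`, the push-out in the category of groups
of the two product projections `p₁ : A × B ⟶ A` and `p₂ : A × B ⟶ B` is the trivial
group.  Hence the join of any two groups, computed as this push-out, is trivial, and
the category of groups satisfies the join axiom. -/
theorem pushout_of_projections_trivial (A B : Type) [Group A] [Group B] :
    IsPushout
      (GrpCat.ofHom (MonoidHom.fst A B))
      (GrpCat.ofHom (MonoidHom.snd A B))
      (GrpCat.ofHom (1 : A →* PUnit))
      (GrpCat.ofHom (1 : B →* PUnit)) := by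
  have sq : CommSq (GrpCat.ofHom (MonoidHom.fst A B)) (GrpCat.ofHom (MonoidHom.snd A B))
      (GrpCat.ofHom (1 : A →* PUnit)) (GrpCat.ofHom (1 : B →* PUnit)) := ⟨rfl⟩
  have trivial_initial := (GrpCat.isZero_of_subsingleton (GrpCat.of PUnit)).isInitial
  refine IsPushout.of_isColimit' sq <| Limits.PushoutCocone.IsColimit.mk sq.w
    (fun s => trivial_initial.to s.pt) (fun s => ?_) (fun s => ?_)
    (fun s m _ _ => trivial_initial.hom_ext _ _)
  all_goals
    have hs : s.inl.hom.comp (MonoidHom.fst A B) = s.inr.hom.comp (MonoidHom.snd A B) :=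
      congrArg GrpCat.Hom.hom s.condition
    ext x
  · simp [MonoidHom.eq_one_left_of_comp_fst_eq_comp_snd hs]
  · simp [MonoidHom.eq_one_right_of_comp_fst_eq_comp_snd hs]
end
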